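/- For β ∈ (0,1) and r > 0, the Caputo derivative of e^{rs} converges to r e^{rs} as β → 1⁻ in the sense that r^β · γ(1−β, rs)/Γ(1−β) → r as β → 1⁻ for fixed s > 0. -/

import Mathlib

/-! Write `γ(a, x) / Γ(a) = 1 - Γ(a, x) / Γ(a)` with the upper tail `Γ(a, x) = ∫_x^∞`. For `a ≤ 1`
the tail is at most `x ^ (a - 1) e^{-x}`, bounded as `a → 0⁺`, while `1 / Γ(a) → 0` because `1 / Γ`
is entire with a zero at `0`. The theorem is the case `a = 1 - β`, `x = r s`, times `r ^ β → r`. -/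

open Real Set Filter MeasureTheory Topology

noncomputable def lowerIncompleteGamma (a x : ℝ) : ℝ :=
  ∫ t in (0:ℝ)..x, t ^ (a - 1) * exp (-t)

noncomputable def upperIncompleteGamma (a x : ℝ) : ℝ :=
  ∫ t in Ioi x, t ^ (a - 1) * exp (-t)

-- `Real.Gamma` takes the junk value `0` at its poles, matching the zeros of the entire `1 / Γ`.
theorem Real.continuous_inv_Gamma : Continuous fun x : ℝ => (Gamma x)⁻¹ := by
  have h : (fun x : ℝ => (Gamma x)⁻¹) = fun x : ℝ => ((Complex.Gamma x)⁻¹).re := by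
    ext x
    rw [Complex.Gamma_ofReal, ← Complex.ofReal_inv, Complex.ofReal_re]
  rw [h]
  exact Complex.continuous_re.comp
    (Complex.differentiable_one_div_Gamma.continuous.comp Complex.continuous_ofReal)

theorem lowerIncompleteGamma_add_upperIncompleteGamma {a x : ℝ} (ha : 0 < a) (hx : 0 ≤ x) :
    lowerIncompleteGamma a x + upperIncompleteGamma a x = Gamma a := by
  have hint : IntegrableOn (fun t : ℝ => t ^ (a - 1) * exp (-t)) (Ioi 0) := by
    simpa only [mul_comm] using GammaIntegral_convergent ha
  rw [lowerIncompleteGamma, upperIncompleteGamma, intervalIntegral.integral_of_le hx,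
    ← setIntegral_union (Ioc_disjoint_Ioi le_rfl) measurableSet_Ioi
      (hint.mono_set Ioc_subset_Ioi_self) (hint.mono_set (Ioi_subset_Ioi hx)),
    Ioc_union_Ioi_eq_Ioi hx, Gamma_eq_integral ha]
  simp only [mul_comm]

theorem upperIncompleteGamma_nonneg (a : ℝ) {x : ℝ} (hx : 0 ≤ x) :
    0 ≤ upperIncompleteGamma a x :=
  setIntegral_nonneg measurableSet_Ioi fun _ ht =>
    mul_nonneg (rpow_nonneg (hx.trans (le_of_lt ht)) _) (exp_pos _).le

theorem upperIncompleteGamma_le {a x : ℝ} (ha : a ≤ 1) (hx : 0 < x) :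
    upperIncompleteGamma a x ≤ x ^ (a - 1) * exp (-x) := by
  have hexp : IntegrableOn (fun t : ℝ => exp (-t)) (Ioi x) := by
    simpa only [neg_one_mul] using exp_neg_integrableOn_Ioi x one_pos
  calc upperIncompleteGamma a x ≤ ∫ t in Ioi x, x ^ (a - 1) * exp (-t) := by
        refine integral_mono_of_nonneg ?_ (hexp.const_mul _) ?_
        · filter_upwards [self_mem_ae_restrict measurableSet_Ioi] with t ht
          exact mul_nonneg (rpow_nonneg (hx.le.trans (le_of_lt ht)) _) (exp_pos _).le
        · filter_upwards [self_mem_ae_restrict measurableSet_Ioi] with t ht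
          exact mul_le_mul_of_nonneg_right
            (rpow_le_rpow_of_nonpos hx (le_of_lt ht) (by linarith)) (exp_pos _).le
    _ = x ^ (a - 1) * exp (-x) := by rw [integral_const_mul, integral_exp_neg_Ioi]

theorem tendsto_upperIncompleteGamma_div_Gamma {x : ℝ} (hx : 0 < x) :
    Tendsto (fun a => upperIncompleteGamma a x / Gamma a) (𝓝[>] 0) (𝓝 0) := by
  have hbound : Tendsto (fun a => x ^ (a - 1) * exp (-x) * (Gamma a)⁻¹) (𝓝[>] 0) (𝓝 0) := by
    have hinv : Tendsto (fun a : ℝ => (Gamma a)⁻¹) (𝓝[>] 0) (𝓝 0) := by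
      simpa only [Gamma_zero, inv_zero] using
        (continuous_inv_Gamma.tendsto 0).mono_left nhdsWithin_le_nhds
    have hpow : Tendsto (fun a : ℝ => x ^ (a - 1) * exp (-x)) (𝓝[>] 0)
        (𝓝 (x ^ ((0:ℝ) - 1) * exp (-x))) :=
      (((continuous_const_rpow hx.ne').comp (continuous_sub_right 1)).tendsto 0).mono_left
        nhdsWithin_le_nhds |>.mul_const _
    simpa only [mul_zero] using hpow.mul hinv
  refine squeeze_zero' ?_ ?_ hbound
  · filter_upwards [self_mem_nhdsWithin] with a (ha : 0 < a)
    exact div_nonneg (upperIncompleteGamma_nonneg a hx.le) (Gamma_pos_of_pos ha).le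
  · filter_upwards [inter_mem_nhdsWithin (Ioi 0) (Iio_mem_nhds one_pos)] with a ha
    rw [div_eq_mul_inv]
    exact mul_le_mul_of_nonneg_right (upperIncompleteGamma_le ha.2.le hx)
      (inv_nonneg.mpr (Gamma_pos_of_pos ha.1).le)

theorem tendsto_lowerIncompleteGamma_div_Gamma {x : ℝ} (hx : 0 < x) :
    Tendsto (fun a => lowerIncompleteGamma a x / Gamma a) (𝓝[>] 0) (𝓝 1) := by
  have h := (tendsto_upperIncompleteGamma_div_Gamma hx).const_sub 1
  rw [sub_zero] at h
  refine h.congr' ?_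
  filter_upwards [self_mem_nhdsWithin] with a (ha : 0 < a)
  have hΓ := (Gamma_pos_of_pos ha).ne'
  rw [eq_div_iff hΓ, sub_mul, one_mul, div_mul_cancel₀ _ hΓ]
  linarith [lowerIncompleteGamma_add_upperIncompleteGamma ha hx.le]

theorem tendsto_one_sub_nhdsLT_one : Tendsto (fun β : ℝ => 1 - β) (𝓝[<] 1) (𝓝[>] 0) := by
  refine tendsto_nhdsWithin_of_tendsto_nhds_of_eventually_within _ ?_ ?_
  · have h : Tendsto (fun β : ℝ => 1 - β) (𝓝 1) (𝓝 (1 - 1)) := tendsto_const_nhds.sub tendsto_id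
    simpa only [sub_self] using h.mono_left nhdsWithin_le_nhds
  · filter_upwards [self_mem_nhdsWithin] with β (hβ : β < 1)
    exact sub_pos.mpr hβ

theorem caputo_exp_limit (r s : ℝ) (hr : 0 < r) (hs : 0 < s) :
    Filter.Tendsto
      (fun β : ℝ => r ^ β *
        (∫ t in (0:ℝ)..(r * s), t ^ ((1 - β) - 1) * Real.exp (-t)) / Real.Gamma (1 - β))
      (nhdsWithin 1 (Set.Iio 1)) (nhds r) := by
  have hpow : Tendsto (fun β : ℝ => r ^ β) (𝓝[<] 1) (𝓝 r) := by
    simpa only [rpow_one] using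
      ((continuous_const_rpow hr.ne').tendsto 1).mono_left nhdsWithin_le_nhds
  have hratio := (tendsto_lowerIncompleteGamma_div_Gamma (mul_pos hr hs)).comp
    tendsto_one_sub_nhdsLT_one
  have h := hpow.mul hratio
  rw [mul_one] at h
  exact h.congr fun β => by simp only [Function.comp_apply, lowerIncompleteGamma, mul_div_assoc]
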